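/- If h and h' are partial orders on the same finite set V and the relation ≻_h is strictly contained in the relation ≻_{h'} (i.e., ≻_h ⊆ ≻_{h'} and ≻_h ≠ ≻_{h'}), then |L[h']| < |L[h]|: adding order relations strictly decreases the number of linear extensions. -/

import Mathlib

/-- A (strict) partial order on `V`: an irreflexive transitive binary relation. -/
def IsPartialOrderOn {V : Type*} (r : V → V → Prop) : Prop :=
  (∀ a, ¬ r a a) ∧ (∀ a b c, r a b → r b c → r a c)

/-- `l` is a linear extension of the partial order `r`: it enumerates `V` without
repetition and for `a < b` it is not the case that `l_b ≻ l_a`. -/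
def IsLinext {V : Type*} (r : V → V → Prop) (l : List V) : Prop :=
  l.Nodup ∧ (∀ v : V, v ∈ l) ∧
    ∀ a b : Fin l.length, a < b → ¬ r (l.get b) (l.get a)

/-!
Every linear extension of `h'` is one of `h`, so it suffices to find a linear extension of `h`
that is not one of `h'`. Pick `x ≻_{h'} y` with `x ⊁_h y`. Adjoining `y ≤ x` to the reflexive
closure of `h` still gives a partial order, and by Szpilrajn's theorem it extends to a linear
order; listing `V` along that order gives a linear extension of `h` in which `y` precedes `x`.
-/

open Relation
open scoped List

theorem List.Pairwise.pair_sublist_of_not_rel {α : Type*} {R : α → α → Prop} {a b : α} :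
    ∀ {l : List α}, l.Pairwise R → a ∈ l → b ∈ l → a ≠ b → ¬ R b a → [a, b] <+ l
  | [], _, ha, _, _, _ => absurd ha List.not_mem_nil
  | c :: l, hl, ha, hb, hab, hba => by
    rw [List.pairwise_cons] at hl
    rcases List.mem_cons.1 ha with rfl | ha'
    · exact (List.singleton_sublist.2 ((List.mem_cons.1 hb).resolve_left hab.symm)).cons_cons a
    rcases List.mem_cons.1 hb with rfl | hb'
    · exact absurd (hl.1 a ha') hba
    · exact (hl.2.pair_sublist_of_not_rel ha' hb' hab hba).cons c

/-- The relation obtained from `s` by adjoining `a ≤ b` and closing under transitivity. -/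
theorem isPartialOrder_adjoin {α : Type*} {s : α → α → Prop} [IsPartialOrder α s] {a b : α}
    (hba : ¬ s b a) : IsPartialOrder α (fun u v => s u v ∨ (s u a ∧ s b v)) where
  refl u := Or.inl (refl u)
  trans := by
    rintro u v w (huv | ⟨hua, hbv⟩) (hvw | ⟨hva, hbw⟩)
    · exact Or.inl (_root_.trans huv hvw)
    · exact Or.inr ⟨_root_.trans huv hva, hbw⟩
    · exact Or.inr ⟨hua, _root_.trans hbv hvw⟩
    · exact absurd (_root_.trans hbv hva) hba
  antisymm := by
    rintro u v (huv | ⟨hua, hbv⟩) (hvu | ⟨hva, hbu⟩)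
    · exact antisymm huv hvu
    · exact absurd (_root_.trans hbu (_root_.trans huv hva)) hba
    · exact absurd (_root_.trans hbv (_root_.trans hvu hua)) hba
    · exact absurd (_root_.trans hbv hva) hba

section

variable {V : Type*} {r r' : V → V → Prop} {l : List V}

theorem IsPartialOrderOn.isPartialOrder_reflGen (hr : IsPartialOrderOn r) :
    IsPartialOrder V (ReflGen r) :=
  have : IsTrans V r := ⟨hr.2⟩
  { antisymm := by
      rintro a b (_ | hab) (_ | hba)
      all_goals first | rfl | exact absurd (hr.2 _ _ _ hab hba) (hr.1 a) }

theorem isLinext_iff_pairwise :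
    IsLinext r l ↔ l.Nodup ∧ (∀ v, v ∈ l) ∧ l.Pairwise (fun a b => ¬ r b a) := by
  rw [IsLinext, List.pairwise_iff_get]

theorem IsLinext.mono (hl : IsLinext r' l) (h : ∀ a b, r a b → r' a b) : IsLinext r l :=
  ⟨hl.1, hl.2.1, fun a b hab hr => hl.2.2 a b hab (h _ _ hr)⟩

theorem IsLinext.not_rel_of_pair_sublist {a b : V} (hl : IsLinext r l) (hab : [a, b] <+ l) :
    ¬ r b a := by
  simpa using (isLinext_iff_pairwise.1 hl).2.2.sublist hab

theorem IsLinext.length_eq_natCard (hl : IsLinext r l) : l.length = Nat.card V := by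
  classical
  exact (Nat.card_eq_of_equiv_fin (hl.1.getEquivOfForallMemList l hl.2.1).symm).symm

theorem finite_setOf_isLinext [Finite V] : {l : List V | IsLinext r l}.Finite :=
  (List.finite_length_eq V (Nat.card V)).subset fun _ hl => IsLinext.length_eq_natCard hl

theorem isLinext_sort [Fintype V] (t : V → V → Prop) [IsLinearOrder V t] [DecidableRel t]
    (hrt : ∀ a b, r a b → t a b) : IsLinext r (Finset.univ.sort t) := by
  refine isLinext_iff_pairwise.2 ⟨Finset.sort_nodup _ t, fun v => by simp, ?_⟩
  exact ((Finset.sort_nodup _ t).and (Finset.pairwise_sort _ t)).imp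
    fun ⟨hab, htab⟩ hrba => hab (antisymm htab (hrt _ _ hrba))

theorem exists_isLinext_pair_sublist [Finite V] (hr : IsPartialOrderOn r) {x y : V} (hxy : x ≠ y)
    (h : ¬ r x y) : ∃ l, IsLinext r l ∧ [y, x] <+ l := by
  have := hr.isPartialOrder_reflGen
  have hnxy : ¬ ReflGen r x y := by rintro (_ | hxy') <;> [exact hxy rfl; exact h hxy']
  have := isPartialOrder_adjoin hnxy
  obtain ⟨t, ht, hpt⟩ := extend_partialOrder
    (fun u v => ReflGen r u v ∨ (ReflGen r u y ∧ ReflGen r x v))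
  have := Fintype.ofFinite V
  classical
  refine ⟨Finset.univ.sort t, isLinext_sort t fun a b hab => hpt a b (Or.inl (.single hab)), ?_⟩
  exact (Finset.pairwise_sort _ t).pair_sublist_of_not_rel (by simp) (by simp) hxy.symm
    fun htxy => hxy (antisymm htxy (hpt y x (Or.inr ⟨.refl, .refl⟩)))

end

theorem ncard_linexts_lt_of_ssubset {V : Type*} [Fintype V]
    (r r' : V → V → Prop) (hr : IsPartialOrderOn r) (hr' : IsPartialOrderOn r')
    (hsub : ∀ i j : V, r i j → r' i j) (hne : r ≠ r') :
    {l : List V | IsLinext r' l}.ncard < {l : List V | IsLinext r l}.ncard := by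
  obtain ⟨x, y, hr'xy, hrxy⟩ : ∃ x y, r' x y ∧ ¬ r x y := by
    by_contra! h
    exact hne (funext₂ fun a b => propext ⟨hsub a b, h a b⟩)
  have hxy : x ≠ y := by rintro rfl; exact hr'.1 x hr'xy
  obtain ⟨l, hl, hyx⟩ := exists_isLinext_pair_sublist hr hxy hrxy
  refine Set.ncard_lt_ncard ⟨fun m hm => IsLinext.mono hm hsub, fun h => ?_⟩ finite_setOf_isLinext
  exact (h hl).not_rel_of_pair_sublist hyx hr'xy
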